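/- arXiv:1008.1573 — 4 statements merged into one kernel-verified Lean document; each statement's English description precedes it below -/
import Mathlib

section
/- Let m be a positive integer and p a prime not dividing m. Then, in ZMod p, the sum over k from 1 to p-1 of B_k · ((-m)⁻¹)^k equals (-1)^(m-1) · D_{m-1}; equivalently, ∑_{0<k<p} B_k/(-m)^k ≡ (-1)^(m-1) D_{m-1} (mod p). -/
/-!
For `k < p` the explicit formula `j! S(k, j) = ∑_{i ≤ j} (-1)^(j-i) C(j, i) i^k` for the Stirling
numbers of the second kind, summed over `j < p`, gives a truncated Dobinski formula in `𝔽_p`: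
`B_k = ∑_{i < p} (i^k / i!) e_{p-1-i}` with `e_n = ∑_{r ≤ n} (-1)^r / r! = D_n / n!`.
Multiplying by `x^k`, `x = i₀⁻¹`, and summing over `1 ≤ k ≤ p - 1`, the geometric sums
`∑_k (i x)^k` vanish except at `i = i₀`, where they are `-1`; so the sum is `-e_{p-1-i₀} / i₀!`.
For `i₀ = p - m` Wilson's theorem, in the form `n! (p-1-n)! = (-1)^(n+1)`, turns this into
`(-1)^(m-1) D_{m-1}` when `m < p`. In general `m` may be replaced by `(m - 1) % p + 1`, because
`E_n = (-1)^n D_n` satisfies `E_{n+1} = 1 - (n+1) E_n` and is therefore `p`-periodic mod `p`.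
-/

/-- The Bell numbers: `bell n` is the number of partitions of an `n`-element set,
determined by `bell 0 = 1` and `bell (n+1) = ∑_{k=0}^{n} C(n,k) * bell k`. -/
def bell : ℕ → ℕ
  | 0 => 1
  | n + 1 => ∑ k ∈ (Finset.range (n + 1)).attach, n.choose k * bell k
decreasing_by exact Finset.mem_range.mp k.2

open Finset fwdDiff
open scoped Nat

namespace Nat

theorem stirlingSecond_succ_eq_sum_choose (n j : ℕ) :
    stirlingSecond (n + 1) (j + 1) = ∑ i ∈ range (n + 1), n.choose i * stirlingSecond i j := by
  induction n generalizing j with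
  | zero => simp [stirlingSecond_succ_succ]
  | succ n ih =>
    have pascal := sum_choose_succ_mul (R := ℕ) (fun i _ => stirlingSecond i j) n
    simp only [Nat.cast_id] at pascal
    rw [pascal, ← ih]
    cases j with
    | zero => simp [stirlingSecond_one_right]
    | succ t =>
      simp only [stirlingSecond_succ_succ, mul_add, sum_add_distrib, mul_left_comm _ (t + 1),
        ← mul_sum, ← ih]
      ring

theorem sum_range_stirlingSecond_of_le {n N : ℕ} (h : n ≤ N) :
    ∑ j ∈ range (N + 1), stirlingSecond n j = ∑ j ∈ range (n + 1), stirlingSecond n j :=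
  (sum_subset (range_subset_range.mpr (by omega)) fun _ _ hj =>
    stirlingSecond_eq_zero_of_lt (by simpa using hj)).symm

end Nat

theorem bell_succ_eq_sum (n : ℕ) : bell (n + 1) = ∑ k ∈ range (n + 1), n.choose k * bell k := by
  rw [bell, sum_attach (range (n + 1)) (fun k => n.choose k * bell k)]

theorem bell_eq_sum_stirlingSecond {n N : ℕ} (h : n ≤ N) :
    bell n = ∑ j ∈ range (N + 1), Nat.stirlingSecond n j := by
  rw [Nat.sum_range_stirlingSecond_of_le h]
  clear h
  induction n using Nat.strong_induction_on with
  | _ n ih =>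
    cases n with
    | zero => simp [bell]
    | succ n =>
      rw [bell_succ_eq_sum, sum_range_succ' (Nat.stirlingSecond (n + 1)),
        Nat.stirlingSecond_succ_zero, add_zero]
      simp only [Nat.stirlingSecond_succ_eq_sum_choose]
      rw [sum_comm]
      refine sum_congr rfl fun i hi => ?_
      have hi : i ≤ n := Nat.lt_succ_iff.mp (mem_range.mp hi)
      rw [ih i (Nat.lt_succ_of_le hi), ← Nat.sum_range_stirlingSecond_of_le hi, mul_sum]

theorem fwdDiff_iter_succ_mul_self_apply_zero {R : Type*} [CommRing R] (f : R → R) (j : ℕ) :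
    (Δ_[1])^[j + 1] (fun x => x * f x) 0 = (j + 1) * (Δ_[1])^[j] f 1 := by
  rw [fwdDiff_iter_eq_sum_shift, fwdDiff_iter_eq_sum_shift, sum_range_succ', mul_sum]
  simp only [zero_add, zero_smul, zero_mul, smul_zero, add_zero, Nat.add_sub_add_right]
  refine sum_congr rfl fun i _ => ?_
  have h := congrArg (Nat.cast (R := R)) (Nat.add_one_mul_choose_eq j i)
  simp only [zsmul_eq_mul, nsmul_eq_mul, mul_one, add_comm (1 : R)]
  push_cast at h ⊢
  linear_combination -(-1 : R) ^ (j - i) * f (i + 1) * h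

theorem Nat.factorial_mul_stirlingSecond {R : Type*} [CommRing R] (k j : ℕ) :
    (j ! * stirlingSecond k j : R) = (Δ_[1])^[j] (fun x : R => x ^ k) 0 := by
  induction k generalizing j with
  | zero =>
    cases j with
    | zero => simp
    | succ j => rw [fwdDiff_iter_pow_eq_zero_of_lt (Nat.succ_pos j)]; simp
  | succ k ih =>
    cases j with
    | zero => simp
    | succ j =>
      have shift : (Δ_[1])^[j] (fun x : R => x ^ k) 1
          = (Δ_[1])^[j + 1] (fun x : R => x ^ k) 0 + (Δ_[1])^[j] (fun x : R => x ^ k) 0 := by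
        rw [Function.iterate_succ_apply', fwdDiff, zero_add, sub_add_cancel]
      simp only [_root_.pow_succ']
      rw [fwdDiff_iter_succ_mul_self_apply_zero, shift, ← ih, ← ih, stirlingSecond_succ_succ,
        Nat.factorial_succ]
      push_cast
      ring

theorem Nat.cast_stirlingSecond_eq_sum {K : Type*} [Field K] {k j : ℕ} (hj : (j ! : K) ≠ 0) :
    (stirlingSecond k j : K) =
      ∑ i ∈ range (j + 1), (i : K) ^ k / i ! * ((-1) ^ (j - i) / (j - i)!) := by
  rw [← mul_right_inj' hj, Nat.factorial_mul_stirlingSecond, fwdDiff_iter_eq_sum_shift, mul_sum]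
  refine sum_congr rfl fun i hi => ?_
  have hij : i ≤ j := Nat.lt_succ_iff.mp (mem_range.mp hi)
  have hfact := congrArg (Nat.cast (R := K)) (Nat.choose_mul_factorial_mul_factorial hij)
  push_cast at hfact
  have hi : (i ! : K) ≠ 0 := fun h => hj (by rw [← hfact, h]; ring)
  have hji : ((j - i)! : K) ≠ 0 := fun h => hj (by rw [← hfact, h]; ring)
  simp only [zsmul_eq_mul, zero_add, nsmul_one]
  push_cast
  field_simp
  rw [← hfact]
  ring

def truncExpNegOne (K : Type*) [Field K] (n : ℕ) : K :=
  ∑ r ∈ range (n + 1), (-1) ^ r / r !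

theorem factorial_mul_truncExpNegOne {K : Type*} [Field K] {n : ℕ} (hn : (n ! : K) ≠ 0) :
    n ! * truncExpNegOne K n = numDerangements n := by
  induction n with
  | zero => simp [truncExpNegOne]
  | succ n ih =>
    have hn' : (n ! : K) ≠ 0 := by
      rw [Nat.factorial_succ, Nat.cast_mul] at hn
      exact right_ne_zero_of_mul hn
    have hD := congrArg (Int.cast (R := K)) (numDerangements_succ n)
    push_cast at hD
    rw [truncExpNegOne, sum_range_succ, ← truncExpNegOne, mul_add, mul_div_cancel₀ _ hn, hD,
      ← ih hn', Nat.factorial_succ]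
    push_cast
    ring

theorem bell_eq_sum_pow_div_factorial {K : Type*} [Field K] {k n : ℕ} (hk : k ≤ n)
    (hn : (n ! : K) ≠ 0) :
    (bell k : K) = ∑ i ∈ range (n + 1), (i : K) ^ k / i ! * truncExpNegOne K (n - i) := by
  have hfact : ∀ j ∈ range (n + 1), (j ! : K) ≠ 0 := fun j hj =>
    (IsUnit.natCast_factorial_of_le (isUnit_iff_ne_zero.mpr hn)
      (Nat.lt_succ_iff.mp (mem_range.mp hj))).ne_zero
  calc (bell k : K) = ∑ j ∈ range (n + 1), (Nat.stirlingSecond k j : K) := by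
        rw [bell_eq_sum_stirlingSecond hk, Nat.cast_sum]
    _ = ∑ j ∈ range (n + 1), ∑ i ∈ range (j + 1), (i : K) ^ k / i ! * ((-1) ^ (j - i) / (j - i)!) :=
        sum_congr rfl fun j hj => Nat.cast_stirlingSecond_eq_sum (hfact j hj)
    _ = ∑ i ∈ range (n + 1), ∑ r ∈ range (n + 1 - i), (i : K) ^ k / i ! * ((-1) ^ r / r !) :=
        sum_range_diag_flip (n + 1) fun i r => (i : K) ^ k / i ! * ((-1) ^ r / r !)
    _ = _ := sum_congr rfl fun i hi => by
        rw [truncExpNegOne, mul_sum, show n + 1 - i = n - i + 1 by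
          have := mem_range.mp hi; omega]

theorem neg_one_pow_mul_numDerangements_succ {R : Type*} [CommRing R] (n : ℕ) :
    (-1) ^ (n + 1) * (numDerangements (n + 1) : R)
      = 1 - (n + 1) * ((-1) ^ n * numDerangements n) := by
  have hD := congrArg (Int.cast (R := R)) (numDerangements_succ n)
  push_cast at hD
  have hsq : ((-1 : R) ^ n) ^ 2 = 1 := by rw [← pow_mul, mul_comm, pow_mul, neg_one_sq, one_pow]
  rw [hD]
  linear_combination hsq

namespace ZMod

variable {p : ℕ} [Fact p.Prime]

theorem sum_Icc_one_pow (t : ZMod p) :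
    ∑ k ∈ Icc 1 (p - 1), t ^ k = if t = 1 then -1 else 0 := by
  have hp := (Fact.out : p.Prime).one_lt
  have hIcc : Icc 1 (p - 1) = Ico 1 p := by ext; simp; omega
  split_ifs with ht
  · simp [ht, hIcc, Nat.cast_sub hp.le]
  · rw [hIcc, geom_sum_Ico ht hp.le, ZMod.pow_card, pow_one, sub_self, zero_div]

theorem factorial_mul_factorial_sub_one_sub {n : ℕ} (hn : n < p) :
    (n ! * (p - 1 - n)! : ZMod p) = (-1) ^ (n + 1) := by
  induction n with
  | zero => simp [ZMod.wilsons_lemma]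
  | succ n ih =>
    have h := ih (by omega)
    have hcast : ((p - 1 - (n + 1) + 1 : ℕ) : ZMod p) = -(n + 1) := by
      rw [show p - 1 - (n + 1) + 1 = p - (n + 1) by omega, Nat.cast_sub hn.le, ZMod.natCast_self]
      push_cast
      ring
    rw [show p - 1 - n = p - 1 - (n + 1) + 1 by omega, Nat.factorial_succ,
      Nat.cast_mul (p - 1 - (n + 1) + 1), hcast] at h
    rw [Nat.factorial_succ]
    push_cast at h ⊢
    linear_combination -h

theorem neg_one_pow_mul_numDerangements_periodic :
    Function.Periodic (fun n => (-1 : ZMod p) ^ n * numDerangements n) p := by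
  intro n
  induction n with
  | zero =>
    have hp := (Fact.out : p.Prime).one_le
    have h := neg_one_pow_mul_numDerangements_succ (R := ZMod p) (p - 1)
    rw [Nat.sub_add_cancel hp, Nat.cast_sub hp, ZMod.natCast_self] at h
    simpa using h
  | succ n ih =>
    simp only [add_right_comm n 1 p, neg_one_pow_mul_numDerangements_succ] at ih ⊢
    rw [ih, Nat.cast_add, ZMod.natCast_self, add_zero]

theorem sum_Icc_bell_mul_inv_pow {i₀ : ℕ} (hi₀ : i₀ < p) (h0 : (i₀ : ZMod p) ≠ 0) :
    ∑ k ∈ Icc 1 (p - 1), (bell k : ZMod p) * ((i₀ : ZMod p)⁻¹) ^ k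
      = -(truncExpNegOne (ZMod p) (p - 1 - i₀) / i₀ !) := by
  have hp := (Fact.out : p.Prime).one_le
  have hfact : ((p - 1)! : ZMod p) ≠ 0 := by simp [ZMod.wilsons_lemma]
  have hroot : ∀ i < p, (i : ZMod p) * (i₀ : ZMod p)⁻¹ = 1 ↔ i = i₀ := fun i hi => by
    rw [mul_inv_eq_one₀ h0, ZMod.natCast_eq_natCast_iff', Nat.mod_eq_of_lt hi,
      Nat.mod_eq_of_lt hi₀]
  set c : ℕ → ZMod p := fun i => truncExpNegOne (ZMod p) (p - 1 - i) / (i ! : ZMod p)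
  calc ∑ k ∈ Icc 1 (p - 1), (bell k : ZMod p) * ((i₀ : ZMod p)⁻¹) ^ k
      = ∑ k ∈ Icc 1 (p - 1), ∑ i ∈ range p, c i * ((i : ZMod p) * (i₀ : ZMod p)⁻¹) ^ k := by
        refine sum_congr rfl fun k hk => ?_
        rw [bell_eq_sum_pow_div_factorial (mem_Icc.mp hk).2 hfact, Nat.sub_add_cancel hp, sum_mul]
        refine sum_congr rfl fun i _ => ?_
        rw [mul_pow]
        ring
    _ = ∑ i ∈ range p, c i * ∑ k ∈ Icc 1 (p - 1), ((i : ZMod p) * (i₀ : ZMod p)⁻¹) ^ k := by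
        rw [sum_comm]
        simp only [mul_sum]
    _ = ∑ i ∈ range p, if i = i₀ then -c i else 0 := by
        refine sum_congr rfl fun i hi => ?_
        simp only [sum_Icc_one_pow, hroot i (mem_range.mp hi)]
        split_ifs <;> ring
    _ = -c i₀ := by rw [sum_ite_eq', if_pos (mem_range.mpr hi₀)]

theorem sum_Icc_bell_mul_neg_inv_pow {n : ℕ} (hn : n + 1 < p) :
    ∑ k ∈ Icc 1 (p - 1), (bell k : ZMod p) * ((-((n : ZMod p) + 1))⁻¹) ^ k
      = (-1) ^ n * numDerangements n := by
  have hi₀ : ((p - 1 - n : ℕ) : ZMod p) = -(n + 1) := by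
    rw [show p - 1 - n = p - (n + 1) by omega, Nat.cast_sub hn.le, ZMod.natCast_self]
    push_cast
    ring
  have h0 : ((p - 1 - n : ℕ) : ZMod p) ≠ 0 := by
    rw [Ne, ZMod.natCast_eq_zero_iff]
    exact Nat.not_dvd_of_pos_of_lt (by omega) (by omega)
  have hfact : ∀ j < p, (j ! : ZMod p) ≠ 0 := fun j hj =>
    ((IsUnit.natCast_factorial_iff_of_charP p).mpr hj).ne_zero
  have hW := factorial_mul_factorial_sub_one_sub (p := p) (n := n) (by omega)
  have hD := factorial_mul_truncExpNegOne (hfact n (by omega))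
  have hsq : ((-1 : ZMod p) ^ n) ^ 2 = 1 := by
    rw [← pow_mul, mul_comm, pow_mul, neg_one_sq, one_pow]
  rw [← hi₀, sum_Icc_bell_mul_inv_pow (by omega) h0, show p - 1 - (p - 1 - n) = n by omega]
  field_simp [hfact (p - 1 - n) (by omega)]
  linear_combination (-1 : ZMod p) ^ n * ((p - 1 - n)! : ZMod p) * hD
    - (-1) ^ n * truncExpNegOne (ZMod p) n * hW + truncExpNegOne (ZMod p) n * hsq

end ZMod

theorem bell_sum_eq_derangement (m : ℕ) (hm : 0 < m) (p : ℕ) (hp : p.Prime)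
    (hpm : ¬ p ∣ m) :
    ∑ k ∈ Finset.Icc 1 (p - 1), (bell k : ZMod p) * ((-(m : ZMod p))⁻¹) ^ k
      = (-1) ^ (m - 1) * (numDerangements (m - 1) : ZMod p) := by
  have := Fact.mk hp
  have hmod : (m : ZMod p) = ((m - 1) % p : ℕ) + 1 := by
    rw [ZMod.natCast_mod, Nat.cast_pred hm, sub_add_cancel]
  have hn : (m - 1) % p + 1 < p := by
    refine lt_of_le_of_ne (Nat.mod_lt _ hp.pos) fun h => hpm ?_
    rw [← ZMod.natCast_eq_zero_iff, hmod]
    exact_mod_cast (show (((m - 1) % p + 1 : ℕ) : ZMod p) = 0 by rw [h, ZMod.natCast_self])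
  rw [hmod, ZMod.sum_Icc_bell_mul_neg_inv_pow hn,
    ZMod.neg_one_pow_mul_numDerangements_periodic.map_mod_nat]
end

section
/- For every prime p, the Bell number B_p satisfies B_p ≡ 2 (mod p). -/
open Polynomial

theorem bell_succ (n : ℕ) :
    bell (n + 1) = ∑ k ∈ Finset.range (n + 1), n.choose k * bell k := by
  rw [bell, Finset.sum_attach _ fun k => n.choose k * bell k]

theorem bell_one : bell 1 = 1 := by
  simp [bell_succ, bell]

section BellFunctional

variable (R : Type*) [CommRing R]

noncomputable def bellFunctional : R[X] →ₗ[R] R :=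
  lsum fun n => LinearMap.mulRight R (bell n : R)

variable {R}

theorem bellFunctional_monomial (n : ℕ) (c : R) :
    bellFunctional R (monomial n c) = c * bell n :=
  sum_monomial_index c _ (zero_mul _)

theorem bellFunctional_X_pow (n : ℕ) : bellFunctional R (X ^ n) = bell n := by
  rw [X_pow_eq_monomial, bellFunctional_monomial, one_mul]

theorem bellFunctional_X_add_one_pow (n : ℕ) :
    bellFunctional R ((X + 1) ^ n) = bell (n + 1) := by
  simp only [add_pow, one_pow, mul_one, map_sum, bell_succ, Nat.cast_sum, Nat.cast_mul]
  refine Finset.sum_congr rfl fun k _ => ?_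
  rw [← C_eq_natCast, mul_comm, ← smul_eq_C_mul, map_smul, bellFunctional_X_pow, smul_eq_mul]

theorem bellFunctional_X_mul (f : R[X]) :
    bellFunctional R (X * f) = bellFunctional R (f.comp (X + 1)) := by
  induction f using Polynomial.induction_on' with
  | add f g hf hg => rw [mul_add, map_add, add_comp, map_add, hf, hg]
  | monomial n c =>
    rw [monomial_comp, ← smul_eq_C_mul, map_smul, bellFunctional_X_add_one_pow, smul_eq_mul,
      mul_comm X, monomial_mul_X, bellFunctional_monomial]

theorem bellFunctional_descPochhammer (n : ℕ) : bellFunctional R (descPochhammer R n) = 1 := by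
  induction n with
  | zero => rw [descPochhammer_zero, ← pow_zero X, bellFunctional_X_pow, bell, Nat.cast_one]
  | succ n ih =>
    rw [descPochhammer_succ_left, bellFunctional_X_mul, comp_assoc, sub_comp, X_comp, one_comp,
      add_sub_cancel_right, comp_X, ih]

end BellFunctional

/-- Both sides are monic of degree `p` and vanish on all of `ZMod p`, so their difference,
of degree `< p`, has `p` roots. -/
theorem ZMod.descPochhammer_eq_X_pow_sub_X (p : ℕ) [Fact p.Prime] :
    descPochhammer (ZMod p) p = X ^ p - X := by
  have hp := (Fact.out : p.Prime).one_lt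
  have hdeg : (descPochhammer (ZMod p) p - X ^ p).natDegree < p :=
    IsMonicOfDegree.natDegree_sub_X_pow (by lia)
      ⟨descPochhammer_natDegree _ _, monic_descPochhammer _ _⟩
  have hvanish (a : ZMod p) : (descPochhammer (ZMod p) p).eval a = 0 := by
    rw [descPochhammer_eval_eq_prod_range]
    exact Finset.prod_eq_zero (Finset.mem_range.2 a.val_lt)
      (by rw [ZMod.natCast_zmod_val, sub_self])
  have h := eq_of_natDegree_lt_card_of_eval_eq (descPochhammer (ZMod p) p - X ^ p) (-X)
    Function.injective_id (fun a => by simp [hvanish, ZMod.pow_card])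
    (by rw [ZMod.card, natDegree_neg, natDegree_X]; exact max_lt hdeg hp)
  linear_combination h

/-- For every prime `p`, `B_p ≡ 2 (mod p)`. -/
theorem bell_prime (p : ℕ) (hp : p.Prime) : (bell p : ZMod p) = 2 := by
  have : Fact p.Prime := ⟨hp⟩
  have h := bellFunctional_descPochhammer (R := ZMod p) p
  rw [ZMod.descPochhammer_eq_X_pow_sub_X, map_sub, bellFunctional_X_pow, ← pow_one X,
    bellFunctional_X_pow, bell_one, Nat.cast_one] at h
  linear_combination h
end

section
/- Let p be a prime, m a positive integer not divisible by p, and let r with 1 ≤ r ≤ p-1 be the least positive residue of -m modulo p (so p divides m + r). Then for every integer l with m + r - p ≤ l and l < m (and l ≥ 0), one has r! · (p + l - m - r)! · ((m-1)!/l!) ≡ (-1)^(r+1) (mod p), where (m-1)!/l! denotes the integer ∏_{s=l+1}^{m-1} s. -/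
/-!
Put `n = m + r`, so that `n ≡ 0 (mod p)` and each factor `s` of `∏_{s=l+1}^{m-1} s` is congruent
to `-(n - s)`. Reflecting the product turns it into `(-1)^(m-1-l) (r+1) ⋯ (p-1-k)` with
`k = p + l - m - r`, so multiplying by `r!` gives `(-1)^(m-1-l) (p-1-k)!`. Wilson's theorem in the
form `k! (p-1-k)! ≡ (-1)^(k+1)` finishes, the exponents adding up to `p - r`.
-/

open Nat Finset

theorem Nat.prod_Icc_id_eq_ascFactorial (a b : ℕ) :
    ∏ s ∈ Icc (a + 1) b, s = (a + 1).ascFactorial (b - a) := by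
  rw [ascFactorial_eq_prod_range, ← Ico_add_one_right_eq_Icc, prod_Ico_eq_prod_range,
    Nat.add_sub_add_right]

theorem Nat.cast_ascFactorial_eq_neg_one_pow_mul_descFactorial {R : Type*} [CommRing R]
    {n x : ℕ} (hn : (n : R) = 0) (hx : x ≤ n) (a : ℕ) :
    (x.ascFactorial a : R) = (-1) ^ a * ((n - x).descFactorial a : R) := by
  have hneg : (x : R) = -((n - x : ℕ) : R) := by
    rw [Nat.cast_sub hx, hn, zero_sub, neg_neg]
  rw [cast_ascFactorial, hneg, ascPochhammer_eval_neg_eq_descPochhammer,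
    descPochhammer_eval_eq_descFactorial]

namespace ZMod

variable {p : ℕ} [Fact p.Prime]

theorem cast_factorial_mul_factorial_sub {k : ℕ} (hk : k ≤ p - 1) :
    ((k ! * (p - 1 - k)! : ℕ) : ZMod p) = (-1) ^ (k + 1) := by
  have hwilson : (((p - 1 - k)! * (p - 1).descFactorial k : ℕ) : ZMod p) = -1 := by
    rw [factorial_mul_descFactorial hk, wilsons_lemma]
  rw [Nat.cast_mul, cast_descFactorial (hk.trans (Nat.sub_le p 1))] at hwilson
  have hsq : (-1 : ZMod p) ^ k * (-1) ^ k = 1 := pow_mul_pow_eq_one k (by norm_num)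
  push_cast
  linear_combination (-1 : ZMod p) ^ k * hwilson - (k ! * (p - 1 - k)! : ZMod p) * hsq

theorem neg_one_pow_eq_neg_one_pow_succ_of_add_eq {i j : ℕ} (hij : i + j = p) :
    (-1 : ZMod p) ^ i = (-1) ^ (j + 1) := by
  have hp : (-1 : ZMod p) ^ i * (-1) ^ j = -1 := by rw [← pow_add, hij, neg_one_pow_char]
  have hsq : (-1 : ZMod p) ^ j * (-1) ^ j = 1 := pow_mul_pow_eq_one j (by norm_num)
  linear_combination (-1 : ZMod p) ^ j * hp - (-1 : ZMod p) ^ i * hsq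

end ZMod

theorem factorial_quotient_congruence_general (p : ℕ) (hp : p.Prime)
    (m : ℕ)
    (r : ℕ) (hpr : p ∣ m + r)
    (l : ℕ) (hl1 : m + r - p ≤ l) (hl2 : l < m) :
    ((r.factorial * (p + l - m - r).factorial *
        ∏ s ∈ Finset.Icc (l + 1) (m - 1), s : ℕ) : ZMod p)
      = (-1) ^ (r + 1) := by
  have := Fact.mk hp
  set k := p + l - m - r
  set a := m - 1 - l
  have hn : ((m + r : ℕ) : ZMod p) = 0 := (ZMod.natCast_eq_zero_iff _ _).mpr hpr
  have hprod : (∏ s ∈ Icc (l + 1) (m - 1), s : ZMod p)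
      = (-1) ^ a * ((p - 1 - k).descFactorial a : ZMod p) := by
    rw [← Nat.cast_prod, prod_Icc_id_eq_ascFactorial,
      cast_ascFactorial_eq_neg_one_pow_mul_descFactorial hn (by omega),
      show m + r - (l + 1) = p - 1 - k by omega]
  have hdesc : r ! * (p - 1 - k).descFactorial a = (p - 1 - k)! := by
    rw [← factorial_mul_descFactorial (show a ≤ p - 1 - k by omega),
      show p - 1 - k - a = r by omega]
  calc ((r ! * k ! * ∏ s ∈ Icc (l + 1) (m - 1), s : ℕ) : ZMod p)
      = (-1) ^ a * ((k ! * (r ! * (p - 1 - k).descFactorial a) : ℕ) : ZMod p) := by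
        push_cast [hprod]; ring
    _ = (-1) ^ (a + (k + 1)) := by
        rw [hdesc, ZMod.cast_factorial_mul_factorial_sub (by omega), pow_add]; ring
    _ = (-1) ^ (r + 1) := ZMod.neg_one_pow_eq_neg_one_pow_succ_of_add_eq (by omega)

/-- Key congruence in the proof of Theorem 2: if `r` is the least positive residue of
`-m` modulo `p`, then for `m + r - p ≤ l < m` one has
`r! * (p + l - m - r)! * ((m-1)!/l!) ≡ (-1)^(r+1) (mod p)`, where `(m-1)!/l!` is the
integer `∏_{s=l+1}^{m-1} s`. -/
theorem factorial_quotient_congruence (p : ℕ) (hp : p.Prime)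
    (m : ℕ) (hm : 0 < m) (hpm : ¬ p ∣ m)
    (r : ℕ) (hr1 : 1 ≤ r) (hr2 : r ≤ p - 1) (hpr : p ∣ m + r)
    (l : ℕ) (hl1 : m + r - p ≤ l) (hl2 : l < m) :
    ((r.factorial * (p + l - m - r).factorial *
        ∏ s ∈ Finset.Icc (l + 1) (m - 1), s : ℕ) : ZMod p)
      = (-1) ^ (r + 1) :=
  factorial_quotient_congruence_general p hp m r hpr l hl1 hl2
end

section
/- For every prime p and every nonnegative integer n, the derangement numbers satisfy D_{n+p} ≡ -D_n (mod p). -/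
/-! In characteristic `p` the recurrence `D (n + 1) = (n + 1) * D n - (-1) ^ n` is anti-periodic
with period `p`: shifting `n` by `p` leaves `n + 1` unchanged and flips the sign of `(-1) ^ n`,
because `(-1) ^ p = -1`. Hence `n ↦ -D (n + p)` obeys the same recurrence as `D`, and it starts
at `-D p = (-1) ^ (p - 1) = 1 = D 0`. -/

theorem numDerangements_succ_cast {R : Type*} [CommRing R] (n : ℕ) :
    (numDerangements (n + 1) : R) = (n + 1) * numDerangements n - (-1) ^ n := by
  exact_mod_cast congrArg (Int.cast : ℤ → R) (numDerangements_succ n)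

section CharP

variable {R : Type*} [CommRing R] (p : ℕ) [Fact p.Prime] [CharP R p]

theorem numDerangements_prime_cast : (numDerangements p : R) = -1 := by
  obtain ⟨q, rfl⟩ := Nat.exists_eq_add_one_of_ne_zero (Fact.out : p.Prime).ne_zero
  have hpow : (-1 : R) ^ q = 1 := by
    simpa [pow_succ] using neg_one_pow_char R (q + 1)
  have hzero : ((q + 1 : ℕ) : R) = 0 := CharP.cast_eq_zero R (q + 1)
  rw [numDerangements_succ_cast, ← Nat.cast_succ, hzero, hpow, zero_mul, zero_sub]

theorem numDerangements_add_prime_cast (n : ℕ) :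
    (numDerangements (n + p) : R) = -numDerangements n := by
  induction n with
  | zero => simp [numDerangements_prime_cast]
  | succ n ih =>
    have hp : (p : R) = 0 := CharP.cast_eq_zero R p
    rw [Nat.add_right_comm, numDerangements_succ_cast, numDerangements_succ_cast, ih, pow_add,
      neg_one_pow_char R p, Nat.cast_add, hp]
    ring

end CharP

/-- For every prime `p` and every `n ≥ 0`, the derangement numbers satisfy
`D_{n+p} ≡ -D_n (mod p)`. -/
theorem numDerangements_add_prime (p : ℕ) (hp : p.Prime) (n : ℕ) :
    (numDerangements (n + p) : ZMod p) = -(numDerangements n : ZMod p) := by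
  have := Fact.mk hp
  exact numDerangements_add_prime_cast p n
end
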